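/- arXiv:1809.03645 — 3 statements merged into one kernel-verified Lean document; each statement's English description precedes it below -/
import Mathlib

section
/- Let (Ω, F, P) be a probability space, Y : Ω → ℝ a random variable, δ : Ω → {0,1} a random variable with 0 < P(δ = 1) < 1, and π : ℝ → (0,1) a measurable function such that π(Y) is a version of E[δ | Y]. Define the odds function O(y) = (1 − π(y))/π(y). Then for every bounded measurable A : ℝ → ℝ, the predictive (nonrespondent) mean is given by the exponential-tilting formula E[A(Y) | δ = 0] = E[A(Y) O(Y) | δ = 1] / E[O(Y) | δ = 1], where E[Z | δ = j] = E[Z · 1{δ = j}]/P(δ = j) denotes expectation conditional on the event {δ = j}. -/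
open MeasureTheory
open scoped NNReal ENNReal

/-- Exponential-tilting representation of the predictive (nonrespondent) mean:
for every bounded measurable `A`,
`E[A(Y) | δ = 0] = E[A(Y) O(Y) | δ = 1] / E[O(Y) | δ = 1]`,
where `O(y) = (1 − π(y))/π(y)` and `E[Z | δ = j] = E[Z·1{δ=j}]/P(δ=j)`. -/
theorem exponential_tilting_predictive_mean {Ω : Type*} [MeasurableSpace Ω]
    (P : Measure Ω) [IsProbabilityMeasure P]
    (Y : Ω → ℝ) (δ : Ω → ℝ)
    (hY : Measurable Y) (hδ : Measurable δ)
    (hδ01 : ∀ ω, δ ω = 0 ∨ δ ω = 1)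
    (hp1_pos : 0 < P {ω | δ ω = 1}) (hp1_lt : P {ω | δ ω = 1} < 1)
    (π : ℝ → ℝ) (hπ : Measurable π)
    (hπ_pos : ∀ y, 0 < π y) (hπ_lt : ∀ y, π y < 1)
    (hcond : ∀ B : Set ℝ, MeasurableSet B →
      ∫ ω, δ ω * B.indicator (fun _ => (1 : ℝ)) (Y ω) ∂P
        = ∫ ω, π (Y ω) * B.indicator (fun _ => (1 : ℝ)) (Y ω) ∂P) :
    ∀ A : ℝ → ℝ, Measurable A → (∃ C : ℝ, ∀ y, |A y| ≤ C) →
      (∫ ω in {ω | δ ω = 0}, A (Y ω) ∂P) / (P {ω | δ ω = 0}).toReal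
        = ((∫ ω in {ω | δ ω = 1},
              A (Y ω) * ((1 - π (Y ω)) / π (Y ω)) ∂P) / (P {ω | δ ω = 1}).toReal)
          / ((∫ ω in {ω | δ ω = 1},
              (1 - π (Y ω)) / π (Y ω) ∂P) / (P {ω | δ ω = 1}).toReal) := by
  intro A hA hbdd
  obtain ⟨C, hC⟩ := hbdd
  set S : Set Ω := {ω | δ ω = 1} with hS
  have hSm : MeasurableSet S := hδ (measurableSet_singleton 1)
  have hScompl : {ω | δ ω = 0} = Sᶜ := by
    ext ω; rcases hδ01 ω with h | h <;> simp [S, h]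
  -- measure equality
  have hμν : Measure.map Y (P.restrict S)
      = (Measure.map Y P).withDensity (fun y => ENNReal.ofReal (π y)) := by
    ext B hB
    rw [Measure.map_apply hY hB, Measure.restrict_apply (hY hB),
      withDensity_apply _ hB, setLIntegral_map hB hπ.ennreal_ofReal hY]
    have h1 : ∫ ω, δ ω * B.indicator (fun _ => (1:ℝ)) (Y ω) ∂P
        = (P (Y ⁻¹' B ∩ S)).toReal := by
      have heq : (fun ω => δ ω * B.indicator (fun _ => (1:ℝ)) (Y ω))
          = (Y ⁻¹' B ∩ S).indicator (fun _ => (1:ℝ)) := by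
        funext ω
        rcases hδ01 ω with h | h <;>
          by_cases hb : Y ω ∈ B <;>
          simp [Set.indicator, h, hb, S]
      rw [heq]
      exact integral_indicator_one ((hY hB).inter hSm)
    have h2 : ∫ ω, π (Y ω) * B.indicator (fun _ => (1:ℝ)) (Y ω) ∂P
        = ∫ ω in Y ⁻¹' B, π (Y ω) ∂P := by
      have heq : (fun ω => π (Y ω) * B.indicator (fun _ => (1:ℝ)) (Y ω))
          = (Y ⁻¹' B).indicator (fun ω => π (Y ω)) := by
        funext ω; by_cases hb : Y ω ∈ B <;> simp [Set.indicator, hb]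
      rw [heq, integral_indicator (hY hB)]
    have hint : Integrable (fun ω => π (Y ω)) (P.restrict (Y ⁻¹' B)) := by
      refine ⟨(hπ.comp hY).aestronglyMeasurable, ?_⟩
      apply HasFiniteIntegral.of_bounded (C := 1)
      filter_upwards with ω
      rw [Real.norm_eq_abs, abs_of_pos (hπ_pos _)]
      exact (hπ_lt _).le
    have h3 : ENNReal.ofReal (∫ ω in Y ⁻¹' B, π (Y ω) ∂P)
        = ∫⁻ ω in Y ⁻¹' B, ENNReal.ofReal (π (Y ω)) ∂P :=
      ofReal_integral_eq_lintegral_ofReal hint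
        (Filter.Eventually.of_forall fun ω => (hπ_pos _).le)
    have hc := hcond B hB
    rw [h1, h2] at hc
    rw [← h3, ← hc, ENNReal.ofReal_toReal (measure_ne_top _ _)]
  -- transfer lemma
  have K1 : ∀ g : ℝ → ℝ, Measurable g →
      ∫ ω in S, g (Y ω) ∂P = ∫ ω, π (Y ω) * g (Y ω) ∂P := by
    intro g hg
    have e1 : ∫ ω in S, g (Y ω) ∂P = ∫ y, g y ∂(Measure.map Y (P.restrict S)) :=
      (integral_map hY.aemeasurable hg.aestronglyMeasurable).symm
    rw [e1, hμν]
    have hdens : (fun y => ENNReal.ofReal (π y))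
        = fun y => ((Real.toNNReal (π y) : ℝ≥0) : ℝ≥0∞) := rfl
    rw [hdens, integral_withDensity_eq_integral_smul hπ.real_toNNReal g,
      integral_map hY.aemeasurable
        (((measurable_coe_nnreal_real.comp hπ.real_toNNReal).mul hg).aestronglyMeasurable.congr
          (Filter.Eventually.of_forall fun y => by
            simp [NNReal.smul_def]))]
    congr 1
    funext ω
    simp [NNReal.smul_def, Real.coe_toNNReal _ (hπ_pos (Y ω)).le]
  -- integrability of bounded things
  have hbd : ∀ (f : Ω → ℝ), Measurable f → (∀ ω, |f ω| ≤ |C| + 1) → Integrable f P := by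
    intro f hf hfb
    refine ⟨hf.aestronglyMeasurable, ?_⟩
    exact HasFiniteIntegral.of_bounded (C := |C| + 1)
      (Filter.Eventually.of_forall fun ω => hfb ω)
  have hCC : ∀ y, |A y| ≤ |C| + 1 := fun y => (hC y).trans (by
    have := le_abs_self C; linarith)
  have hAint : Integrable (fun ω => A (Y ω)) P :=
    hbd _ (hA.comp hY) fun ω => hCC (Y ω)
  have hπAint : Integrable (fun ω => π (Y ω) * A (Y ω)) P := by
    refine hbd _ ((hπ.comp hY).mul (hA.comp hY)) fun ω => ?_
    rw [abs_mul]
    calc |π (Y ω)| * |A (Y ω)| ≤ 1 * (|C| + 1) := by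
          apply mul_le_mul
          · rw [abs_of_pos (hπ_pos _)]; exact (hπ_lt _).le
          · exact hCC _
          · exact abs_nonneg _
          · norm_num
      _ = |C| + 1 := one_mul _
  -- K0 for A
  have hI0 : ∫ ω in {ω | δ ω = 0}, A (Y ω) ∂P
      = ∫ ω, (1 - π (Y ω)) * A (Y ω) ∂P := by
    rw [hScompl]
    have e : ∫ ω, (1 - π (Y ω)) * A (Y ω) ∂P
        = ∫ ω, A (Y ω) ∂P - ∫ ω, π (Y ω) * A (Y ω) ∂P := by
      rw [← integral_sub hAint hπAint]; congr 1; funext ω; ring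
    have hadd := integral_add_compl hSm hAint
    have hk := K1 A hA
    linarith
  -- K0 for constant 1
  have h1int : Integrable (fun _ : Ω => (1:ℝ)) P := integrable_const 1
  have hπint : Integrable (fun ω => π (Y ω)) P := by
    refine ⟨(hπ.comp hY).aestronglyMeasurable, ?_⟩
    exact HasFiniteIntegral.of_bounded (C := 1)
      (Filter.Eventually.of_forall fun ω => by
        rw [Real.norm_eq_abs, abs_of_pos (hπ_pos _)]; exact (hπ_lt _).le)
  have hP0 : (P {ω | δ ω = 0}).toReal = ∫ ω, (1 - π (Y ω)) ∂P := by
    rw [hScompl]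
    have e : ∫ ω, (1 - π (Y ω)) ∂P = ∫ ω, (1:ℝ) ∂P - ∫ ω, π (Y ω) ∂P := by
      rw [← integral_sub h1int hπint]
    have hadd := integral_add_compl hSm h1int
    have hk := K1 (fun _ => 1) measurable_const
    simp only [mul_one] at hk
    have hm1 : ∫ ω in Sᶜ, (1:ℝ) ∂P = (P Sᶜ).toReal := by
      rw [setIntegral_const, smul_eq_mul, mul_one]
      rfl
    linarith
  -- numerator identity
  have hNum : ∫ ω in S, A (Y ω) * ((1 - π (Y ω)) / π (Y ω)) ∂P
      = ∫ ω in {ω | δ ω = 0}, A (Y ω) ∂P := by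
    rw [K1 (fun y => A y * ((1 - π y) / π y))
        (hA.mul ((measurable_const.sub hπ).div hπ)), hI0]
    congr 1; funext ω
    have hne := (hπ_pos (Y ω)).ne'
    field_simp
  -- denominator identity
  have hDen : ∫ ω in S, (1 - π (Y ω)) / π (Y ω) ∂P = (P {ω | δ ω = 0}).toReal := by
    rw [K1 (fun y => (1 - π y) / π y) ((measurable_const.sub hπ).div hπ), hP0]
    congr 1; funext ω
    have hne := (hπ_pos (Y ω)).ne'
    field_simp
  rw [hNum, hDen]
  -- final arithmetic
  have hp1ne : (P S).toReal ≠ 0 :=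
    (ENNReal.toReal_pos hp1_pos.ne' (measure_ne_top _ _)).ne'
  have hp0pos : 0 < P {ω | δ ω = 0} := by
    rw [hScompl, measure_compl hSm (measure_ne_top _ _), measure_univ]
    exact tsub_pos_iff_lt.mpr hp1_lt
  have hp0ne : (P {ω | δ ω = 0}).toReal ≠ 0 :=
    (ENNReal.toReal_pos hp0pos.ne' (measure_ne_top _ _)).ne'
  field_simp
end

section
/- Let σ(t) = exp(t)/(1 + exp(t)) denote the logistic function. Let f : ℝ → [0, ∞) be a measurable probability density with respect to Lebesgue measure, let g : ℝ → ℝ be measurable, let a ∈ ℝ, and set π(y) = σ(a + g(y)), so π : ℝ → (0,1). Assume p₁ := ∫ π f ∈ (0,1) and define f₁ = π f / p₁ and f₀ = (1 − π) f / (1 − p₁). Assume exp(−g) f₁ is Lebesgue-integrable with ∫ exp(−g) f₁ > 0. Then (1 − π(y))/π(y) = exp(−a − g(y)) for all y, and f₀(y) = f₁(y) exp(−g(y)) / ∫ exp(−g) f₁ for Lebesgue-a.e. y; in particular the right-hand side does not depend on a, so the predictive density f₀ is free of the linear-predictor offset a. -/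
open MeasureTheory

/-- Under the logistic semiparametric response model `π(y) = σ(a + g(y))`,
the nonresponse odds are `(1−π(y))/π(y) = exp(−a−g(y))` and the predictive
density satisfies the exponential-tilting formula
`f₀(y) = f₁(y) exp(−g(y)) / ∫ exp(−g) f₁` a.e., which is free of `a`. -/
theorem logistic_exponential_tilting
    (σ : ℝ → ℝ) (hσ : ∀ t, σ t = Real.exp t / (1 + Real.exp t))
    (f π f₁ f₀ : ℝ → ℝ) (g : ℝ → ℝ) (a : ℝ) (p₁ : ℝ)
    (hf_meas : Measurable f) (hf_nonneg : ∀ y, 0 ≤ f y)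
    (hf_prob : ∫ y : ℝ, f y = 1)
    (hg_meas : Measurable g)
    (hπ_def : ∀ y, π y = σ (a + g y))
    (hp₁ : p₁ = ∫ y : ℝ, π y * f y) (hp₁_pos : 0 < p₁) (hp₁_lt : p₁ < 1)
    (hf₁ : ∀ y, f₁ y = π y * f y / p₁)
    (hf₀ : ∀ y, f₀ y = (1 - π y) * f y / (1 - p₁))
    (htilt_int : Integrable (fun y => Real.exp (-(g y)) * f₁ y))
    (htilt_pos : 0 < ∫ y : ℝ, Real.exp (-(g y)) * f₁ y) :
    (∀ y, (1 - π y) / π y = Real.exp (-a - g y)) ∧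
    (∀ᵐ y : ℝ, f₀ y = f₁ y * Real.exp (-(g y)) / ∫ t : ℝ, Real.exp (-(g t)) * f₁ t) := by
  have hEpos : ∀ y, (0:ℝ) < 1 + Real.exp (a + g y) := fun y => by positivity
  have hπval : ∀ y, π y = Real.exp (a + g y) / (1 + Real.exp (a + g y)) := fun y => by
    rw [hπ_def, hσ]
  -- key identity: exp(-g) * π = exp a * (1 - π)
  have hkey : ∀ y, Real.exp (-(g y)) * π y = Real.exp a * (1 - π y) := by
    intro y
    have h := (hEpos y).ne'
    rw [hπval y]
    field_simp
    rw [← Real.exp_add]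
    ring_nf
  -- odds formula
  have hodds : ∀ y, (1 - π y) / π y = Real.exp (-a - g y) := by
    intro y
    have h := (hEpos y).ne'
    have he := (Real.exp_pos (a + g y)).ne'
    rw [hπval y, show (-a - g y) = -(a + g y) by ring, Real.exp_neg]
    rw [div_eq_iff (by positivity : Real.exp (a + g y) / (1 + Real.exp (a + g y)) ≠ 0)]
    field_simp
    ring
  -- integrability of f and π f
  have hf_int : Integrable f := by
    by_contra h
    rw [integral_undef h] at hf_prob
    norm_num at hf_prob
  have hπf_int : Integrable (fun y => π y * f y) := by
    by_contra h
    rw [hp₁, integral_undef h] at hp₁_pos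
    exact lt_irrefl _ hp₁_pos
  have hsub : (∫ y : ℝ, (1 - π y) * f y) = 1 - p₁ := by
    have : (fun y => (1 - π y) * f y) = fun y => f y - π y * f y := by
      funext y; ring
    rw [this, integral_sub hf_int hπf_int, hf_prob, hp₁]
  -- value of tilting integral
  have hT : (∫ t : ℝ, Real.exp (-(g t)) * f₁ t) = Real.exp a * (1 - p₁) / p₁ := by
    have : (fun t => Real.exp (-(g t)) * f₁ t)
        = fun t => (Real.exp a / p₁) * ((1 - π t) * f t) := by
      funext t
      rw [hf₁ t, show Real.exp (-(g t)) * (π t * f t / p₁)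
            = (Real.exp (-(g t)) * π t) * f t / p₁ by ring, hkey t]
      ring
    rw [this, integral_const_mul, hsub]
    ring
  refine ⟨hodds, Filter.Eventually.of_forall fun y => ?_⟩
  rw [hT, hf₀ y, hf₁ y,
    show π y * f y / p₁ * Real.exp (-(g y))
        = (Real.exp (-(g y)) * π y) * f y / p₁ by ring, hkey y]
  have hp := hp₁_pos.ne'
  have h1p : (1:ℝ) - p₁ ≠ 0 := by linarith
  have hea := (Real.exp_pos a).ne'
  field_simp
end

section
/- Let (Ω, F, P) be a probability space, Y : Ω → ℝ a random variable, δ : Ω → {0,1} with 0 < P(δ = 1) < 1, and suppose π(Y) is a version of E[δ | Y] where π(y) = σ(a + g(y)) for a constant a ∈ ℝ, a measurable function g : ℝ → ℝ, and σ(t) = exp(t)/(1 + exp(t)) the logistic function. Then for every bounded measurable A : ℝ → ℝ, provided exp(−g(Y))·1{δ=1} is integrable with E[exp(−g(Y)) | δ = 1] > 0, one has E[A(Y) | δ = 0] = E[A(Y) exp(−g(Y)) | δ = 1] / E[exp(−g(Y)) | δ = 1]; in particular this expression does not involve a. -/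
open MeasureTheory

/-- Exponential tilting under the logistic response model on a probability
space: if `π(y) = σ(a + g(y))` is a version of `E[δ | Y]`, then for every
bounded measurable `A`, provided `exp(−g(Y))·1{δ=1}` is integrable and
`E[exp(−g(Y)) | δ = 1] > 0`,
`E[A(Y) | δ = 0] = E[A(Y) exp(−g(Y)) | δ = 1] / E[exp(−g(Y)) | δ = 1]`,
an expression not involving `a`. -/
theorem logistic_tilting_conditional_mean {Ω : Type*} [MeasurableSpace Ω]
    (P : Measure Ω) [IsProbabilityMeasure P]
    (Y : Ω → ℝ) (δ : Ω → ℝ)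
    (hY : Measurable Y) (hδ : Measurable δ)
    (hδ01 : ∀ ω, δ ω = 0 ∨ δ ω = 1)
    (hp1_pos : 0 < P {ω | δ ω = 1}) (hp1_lt : P {ω | δ ω = 1} < 1)
    (σ : ℝ → ℝ) (hσ : ∀ t, σ t = Real.exp t / (1 + Real.exp t))
    (a : ℝ) (g : ℝ → ℝ) (hg : Measurable g)
    (π : ℝ → ℝ) (hπ_def : ∀ y, π y = σ (a + g y))
    (hcond : ∀ B : Set ℝ, MeasurableSet B →
      ∫ ω, δ ω * B.indicator (fun _ => (1 : ℝ)) (Y ω) ∂P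
        = ∫ ω, π (Y ω) * B.indicator (fun _ => (1 : ℝ)) (Y ω) ∂P)
    (htilt_int : IntegrableOn (fun ω => Real.exp (-(g (Y ω)))) {ω | δ ω = 1} P)
    (htilt_pos : 0 < (∫ ω in {ω | δ ω = 1}, Real.exp (-(g (Y ω))) ∂P)
        / (P {ω | δ ω = 1}).toReal) :
    ∀ A : ℝ → ℝ, Measurable A → (∃ C : ℝ, ∀ y, |A y| ≤ C) →
      (∫ ω in {ω | δ ω = 0}, A (Y ω) ∂P) / (P {ω | δ ω = 0}).toReal
        = ((∫ ω in {ω | δ ω = 1},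
              A (Y ω) * Real.exp (-(g (Y ω))) ∂P) / (P {ω | δ ω = 1}).toReal)
          / ((∫ ω in {ω | δ ω = 1},
              Real.exp (-(g (Y ω))) ∂P) / (P {ω | δ ω = 1}).toReal) := by
  intro A hA _hAbd
  classical
  set S1 : Set Ω := {ω | δ ω = 1} with hS1
  set S0 : Set Ω := {ω | δ ω = 0} with hS0
  have hS1m : MeasurableSet S1 := hδ (measurableSet_singleton 1)
  have hS0m : MeasurableSet S0 := hδ (measurableSet_singleton 0)
  have hS0c : S0 = S1ᶜ := by
    ext ω
    simp only [hS0, hS1, Set.mem_setOf_eq, Set.mem_compl_iff]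
    rcases hδ01 ω with h | h <;> simp [h]
  -- π formula and bounds
  have hπ_eq : ∀ y, π y = Real.exp (a + g y) / (1 + Real.exp (a + g y)) := fun y => by
    rw [hπ_def, hσ]
  have hden : ∀ t : ℝ, (0:ℝ) < 1 + Real.exp t := fun t => by positivity
  have hπ_nonneg : ∀ y, 0 ≤ π y := fun y => by
    rw [hπ_eq]; positivity
  have hπ_le_one : ∀ y, π y ≤ 1 := fun y => by
    rw [hπ_eq, div_le_one (hden _)]
    linarith [Real.exp_pos (a + g y)]
  have hπm : Measurable π := by
    have h : π = fun y => Real.exp (a + g y) / (1 + Real.exp (a + g y)) := funext hπ_eq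
    rw [h]
    exact (Real.measurable_exp.comp (measurable_const.add hg)).div
      (measurable_const.add (Real.measurable_exp.comp (measurable_const.add hg)))
  -- measures
  set Q : Measure ℝ := Measure.map Y P with hQdef
  haveI hQprob : IsProbabilityMeasure Q := Measure.isProbabilityMeasure_map hY.aemeasurable
  set μ1 : Measure ℝ := Measure.map Y (P.restrict S1) with hμ1def
  set μ0 : Measure ℝ := Measure.map Y (P.restrict S0) with hμ0def
  -- Step A : μ1 = Q.withDensity (ofReal ∘ π)
  have hν1_ne : ∀ B : Set ℝ, (∫⁻ y in B, ENNReal.ofReal (π y) ∂Q) ≠ ⊤ := by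
    intro B
    have hle : (∫⁻ y in B, ENNReal.ofReal (π y) ∂Q) ≤ ∫⁻ _ in B, 1 ∂Q := by
      refine lintegral_mono fun y => ?_
      simpa using ENNReal.ofReal_le_one.mpr (hπ_le_one y)
    have : (∫⁻ _ in B, (1:ENNReal) ∂Q) = Q B := by simp
    exact ne_top_of_le_ne_top (by rw [this]; exact measure_ne_top Q B) hle
  have hA1 : μ1 = Q.withDensity (fun y => ENNReal.ofReal (π y)) := by
    refine Measure.ext fun B hB => ?_
    have hμ1B : μ1 B = P (Y ⁻¹' B ∩ S1) := by
      rw [hμ1def, Measure.map_apply hY hB, Measure.restrict_apply (hY hB)]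
    have hνB : (Q.withDensity (fun y => ENNReal.ofReal (π y))) B
        = ∫⁻ y in B, ENNReal.ofReal (π y) ∂Q := withDensity_apply _ hB
    have hkey := hcond B hB
    -- LHS of hcond
    have hL : (fun ω => δ ω * B.indicator (fun _ => (1:ℝ)) (Y ω))
        = (Y ⁻¹' B ∩ S1).indicator (1 : Ω → ℝ) := by
      funext ω
      rcases hδ01 ω with h | h <;>
        by_cases hy : Y ω ∈ B <;>
          simp [Set.indicator, h, hy, hS1]
    have hLint : ∫ ω, δ ω * B.indicator (fun _ => (1:ℝ)) (Y ω) ∂P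
        = (P (Y ⁻¹' B ∩ S1)).toReal := by
      rw [hL]
      exact integral_indicator_one ((hY hB).inter hS1m)
    -- RHS of hcond
    have hR : (fun ω => π (Y ω) * B.indicator (fun _ => (1:ℝ)) (Y ω))
        = fun ω => B.indicator π (Y ω) := by
      funext ω
      by_cases hy : Y ω ∈ B <;> simp [Set.indicator, hy]
    have hRint : ∫ ω, π (Y ω) * B.indicator (fun _ => (1:ℝ)) (Y ω) ∂P
        = (∫⁻ y in B, ENNReal.ofReal (π y) ∂Q).toReal := by
      rw [hR]
      rw [← integral_map hY.aemeasurable (hπm.indicator hB).aestronglyMeasurable]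
      rw [integral_indicator hB]
      rw [integral_eq_lintegral_of_nonneg_ae
        (Filter.Eventually.of_forall fun y => hπ_nonneg y)
        (hπm.aestronglyMeasurable.restrict)]
    have htoReal : (P (Y ⁻¹' B ∩ S1)).toReal
        = (∫⁻ y in B, ENNReal.ofReal (π y) ∂Q).toReal := by
      rw [← hLint, ← hRint]; exact hkey
    rw [hμ1B, hνB]
    exact (ENNReal.toReal_eq_toReal_iff' (measure_ne_top P _) (hν1_ne B)).mp htoReal
  -- Step B : μ0 = Q.withDensity (ofReal ∘ (1 - π))
  have hA0 : μ0 = Q.withDensity (fun y => ENNReal.ofReal (1 - π y)) := by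
    refine Measure.ext fun B hB => ?_
    have hμ0B : μ0 B = P (Y ⁻¹' B ∩ S0) := by
      rw [hμ0def, Measure.map_apply hY hB, Measure.restrict_apply (hY hB)]
    have hμ1B : μ1 B = P (Y ⁻¹' B ∩ S1) := by
      rw [hμ1def, Measure.map_apply hY hB, Measure.restrict_apply (hY hB)]
    have hsplit : P (Y ⁻¹' B ∩ S1) + P (Y ⁻¹' B ∩ S0) = Q B := by
      have hdiff : Y ⁻¹' B ∩ S0 = Y ⁻¹' B \ S1 := by
        rw [hS0c]; rfl
      rw [hdiff, measure_inter_add_diff _ hS1m, hQdef, Measure.map_apply hY hB]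
    have hadd : (∫⁻ y in B, ENNReal.ofReal (π y) ∂Q)
        + (∫⁻ y in B, ENNReal.ofReal (1 - π y) ∂Q) = Q B := by
      rw [← lintegral_add_left hπm.ennreal_ofReal]
      have hone : (fun y => ENNReal.ofReal (π y) + ENNReal.ofReal (1 - π y))
          = fun _ : ℝ => (1 : ENNReal) := by
        funext y
        rw [← ENNReal.ofReal_add (hπ_nonneg y) (by linarith [hπ_le_one y])]
        norm_num
      rw [hone]
      exact setLIntegral_one B
    have hν1B : (Q.withDensity (fun y => ENNReal.ofReal (π y))) B
        = ∫⁻ y in B, ENNReal.ofReal (π y) ∂Q := withDensity_apply _ hB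
    have hν0B : (Q.withDensity (fun y => ENNReal.ofReal (1 - π y))) B
        = ∫⁻ y in B, ENNReal.ofReal (1 - π y) ∂Q := withDensity_apply _ hB
    rw [hμ0B, hν0B]
    have hμ1eq : P (Y ⁻¹' B ∩ S1) = ∫⁻ y in B, ENNReal.ofReal (π y) ∂Q := by
      rw [← hμ1B, hA1, hν1B]
    refine (ENNReal.add_right_inj (a := ∫⁻ y in B, ENNReal.ofReal (π y) ∂Q)
      (hν1_ne B)).mp ?_
    rw [hadd, ← hμ1eq, hsplit]
  -- Step C : the key tilting identity
  have key : ∀ f : ℝ → ℝ, Measurable f →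
      ∫ ω in S0, f (Y ω) ∂P
        = Real.exp (-a) * ∫ ω in S1, Real.exp (-(g (Y ω))) * f (Y ω) ∂P := by
    intro f hf
    have h1 : ∫ ω in S0, f (Y ω) ∂P = ∫ y, f y ∂μ0 :=
      (integral_map hY.aemeasurable hf.aestronglyMeasurable).symm
    have h2 : ∫ y, f y ∂μ0 = ∫ y, (1 - π y).toNNReal • f y ∂Q := by
      rw [hA0]
      exact integral_withDensity_eq_integral_smul
        ((measurable_const.sub hπm).real_toNNReal) f
    have h3 : ∫ y, (1 - π y).toNNReal • f y ∂Q
        = ∫ y, (π y).toNNReal • (Real.exp (-a) * (Real.exp (-(g y)) * f y)) ∂Q := by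
      refine integral_congr_ae (Filter.Eventually.of_forall fun y => ?_)
      have h1π : ((1 - π y).toNNReal : ℝ) = 1 - π y :=
        Real.coe_toNNReal _ (by linarith [hπ_le_one y])
      have hππ : ((π y).toNNReal : ℝ) = π y := Real.coe_toNNReal _ (hπ_nonneg y)
      simp only [NNReal.smul_def, smul_eq_mul]
      rw [h1π, hππ]
      have hid : 1 - π y = π y * (Real.exp (-a) * Real.exp (-(g y))) := by
        rw [hπ_eq]
        have hne : (1 : ℝ) + Real.exp (a + g y) ≠ 0 := ne_of_gt (hden _)
        have hexpne : Real.exp (a + g y) ≠ 0 := (Real.exp_pos _).ne'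
        rw [← Real.exp_add, show -a + -g y = -(a + g y) by ring, Real.exp_neg]
        field_simp
        ring
      rw [hid]; ring
    have h4 : ∫ y, (π y).toNNReal • (Real.exp (-a) * (Real.exp (-(g y)) * f y)) ∂Q
        = ∫ y, Real.exp (-a) * (Real.exp (-(g y)) * f y) ∂μ1 := by
      rw [hA1]
      exact (integral_withDensity_eq_integral_smul (hπm.real_toNNReal) _).symm
    have h5 : ∫ y, Real.exp (-a) * (Real.exp (-(g y)) * f y) ∂μ1
        = Real.exp (-a) * ∫ y, Real.exp (-(g y)) * f y ∂μ1 :=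
      integral_const_mul _ _
    have h6 : ∫ y, Real.exp (-(g y)) * f y ∂μ1
        = ∫ ω in S1, Real.exp (-(g (Y ω))) * f (Y ω) ∂P :=
      integral_map hY.aemeasurable
        (((Real.measurable_exp.comp hg.neg).mul hf).aestronglyMeasurable)
    rw [h1, h2, h3, h4, h5, h6]
  -- Apply key to A and to 1
  set p : ℝ := (P S1).toReal with hp
  set T : ℝ := ∫ ω in S1, Real.exp (-(g (Y ω))) ∂P with hT
  set S : ℝ := ∫ ω in S1, A (Y ω) * Real.exp (-(g (Y ω))) ∂P with hSdef
  have hnum : ∫ ω in S0, A (Y ω) ∂P = Real.exp (-a) * S := by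
    rw [key A hA, hSdef]
    congr 1
    exact integral_congr_ae (Filter.Eventually.of_forall fun ω => mul_comm _ _)
  have hdenom : (P S0).toReal = Real.exp (-a) * T := by
    have h := key (fun _ => (1:ℝ)) measurable_const
    simp [hT] at h
    exact h
  have hppos : 0 < p := ENNReal.toReal_pos hp1_pos.ne' (measure_ne_top P S1)
  have hTpos : 0 < T := by
    have := mul_pos htilt_pos hppos
    rwa [div_mul_cancel₀ _ hppos.ne'] at this
  have hea : Real.exp (-a) ≠ 0 := (Real.exp_pos _).ne'
  rw [hnum, hdenom, mul_div_mul_left _ _ hea]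
  field_simp
end
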